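/- arXiv:2404.15975 — 2 statements merged into one kernel-verified Lean document; each statement's English description precedes it below -/
import Mathlib

section
/- Let $n \ge 1$ and $s \in (0,1)$. There exists a constant $c > 0$ depending only on $n$ and $s$ such that for all unit vectors $v_1, v_2 \in \mathbb{S}^{n-1}$, $$|v_1 - v_2| \le c \sup_{x \in B_1} \big| (v_1 \cdot x)_+^s - (v_2 \cdot x)_+^s \big|,$$ where $B_1$ is the closed unit ball in $\mathbb{R}^n$. -/
/-!
Test the supremum at `x₀ = (v₁ - v₂) / |v₁ - v₂|`. Since `|v₁| = |v₂|`, one has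
`⟪v₁, x₀⟫ = |v₁ - v₂| / 2 = -⟪v₂, x₀⟫`, so the integrand at `x₀` equals `(|v₁ - v₂| / 2) ^ s`,
which dominates `|v₁ - v₂| / 2` because `s ≤ 1`; hence `c = 2` works. When `v₁ = v₂` the test
point is `0` (as `‖0‖⁻¹ = 0`) and the identity still holds, so no case split is needed.
-/

open scoped RealInnerProductSpace

section

variable {E : Type*} [NormedAddCommGroup E] [InnerProductSpace ℝ E]

noncomputable def halfspaceSolution (s : ℝ) (v x : E) : ℝ := (max ⟪v, x⟫ 0) ^ s

lemma halfspaceSolution_le {s : ℝ} (hs : 0 ≤ s) (v : E) {x : E} (hx : ‖x‖ ≤ 1) :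
    halfspaceSolution s v x ≤ ‖v‖ ^ s := by
  refine Real.rpow_le_rpow (le_max_right _ _) (max_le ?_ (norm_nonneg v)) hs
  calc ⟪v, x⟫ ≤ ‖v‖ * ‖x‖ := real_inner_le_norm v x
    _ ≤ ‖v‖ := mul_le_of_le_one_right (norm_nonneg v) hx

lemma bddAbove_abs_halfspaceSolution_sub {s : ℝ} (hs : 0 ≤ s) (v₁ v₂ : E) :
    BddAbove (Set.range fun x : Metric.closedBall (0 : E) 1 =>
      |halfspaceSolution s v₁ x - halfspaceSolution s v₂ x|) := by
  refine ⟨max (‖v₁‖ ^ s) (‖v₂‖ ^ s), ?_⟩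
  rintro _ ⟨x, rfl⟩
  have hx : ‖(x : E)‖ ≤ 1 := mem_closedBall_zero_iff.mp x.2
  exact abs_sub_le_of_nonneg_of_le (Real.rpow_nonneg (le_max_right _ _) s)
    ((halfspaceSolution_le hs v₁ hx).trans (le_max_left _ _))
    (Real.rpow_nonneg (le_max_right _ _) s)
    ((halfspaceSolution_le hs v₂ hx).trans (le_max_right _ _))

lemma norm_inv_norm_smul_le_one (w : E) : ‖‖w‖⁻¹ • w‖ ≤ 1 := by
  rw [norm_smul, norm_inv, norm_norm]
  exact inv_mul_le_one

lemma inner_sub_eq_half_norm_sub_sq {u v : E} (h : ‖u‖ = ‖v‖) :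
    ⟪u, u - v⟫ = ‖u - v‖ ^ 2 / 2 := by
  rw [norm_sub_sq_real, inner_sub_right, real_inner_self_eq_norm_sq, h]
  ring

lemma abs_halfspaceSolution_sub_at_normalized_sub {s : ℝ} (hs : 0 < s) {u v : E}
    (h : ‖u‖ = ‖v‖) :
    |halfspaceSolution s u (‖u - v‖⁻¹ • (u - v)) - halfspaceSolution s v (‖u - v‖⁻¹ • (u - v))|
      = (‖u - v‖ / 2) ^ s := by
  have hu : ⟪u, ‖u - v‖⁻¹ • (u - v)⟫ = ‖u - v‖ / 2 := by
    rw [real_inner_smul_right, inner_sub_eq_half_norm_sub_sq h]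
    field_simp
  have hv : ⟪v, ‖u - v‖⁻¹ • (u - v)⟫ = -(‖u - v‖ / 2) := by
    have h' : ⟪v, u - v⟫ = -(‖u - v‖ ^ 2 / 2) := by
      rw [← neg_sub v u, inner_neg_right, inner_sub_eq_half_norm_sub_sq h.symm, norm_neg]
    rw [real_inner_smul_right, h']
    field_simp
  have hδ : 0 ≤ ‖u - v‖ / 2 := by positivity
  rw [halfspaceSolution, halfspaceSolution, hu, hv, max_eq_left hδ,
    max_eq_right (neg_nonpos.mpr hδ), Real.zero_rpow hs.ne', sub_zero,
    abs_of_nonneg (Real.rpow_nonneg hδ s)]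

end

theorem normal_controlled_by_halfspace_sup_general (n : ℕ) (s : ℝ)
    (hs : 0 < s) (hs1 : s < 1) :
    ∃ c : ℝ, 0 < c ∧ ∀ v₁ v₂ : EuclideanSpace ℝ (Fin n), ‖v₁‖ = 1 → ‖v₂‖ = 1 →
      ‖v₁ - v₂‖ ≤ c * ⨆ x : (Metric.closedBall (0 : EuclideanSpace ℝ (Fin n)) 1),
        |(max ⟪v₁, (x : EuclideanSpace ℝ (Fin n))⟫ 0) ^ s
          - (max ⟪v₂, (x : EuclideanSpace ℝ (Fin n))⟫ 0) ^ s| := by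
  refine ⟨2, two_pos, fun v₁ v₂ h₁ h₂ => ?_⟩
  set δ := ‖v₁ - v₂‖
  have hδ : δ / 2 ≤ 1 := by linarith [norm_sub_le v₁ v₂]
  let x₀ : Metric.closedBall (0 : EuclideanSpace ℝ (Fin n)) 1 :=
    ⟨δ⁻¹ • (v₁ - v₂), mem_closedBall_zero_iff.mpr (norm_inv_norm_smul_le_one _)⟩
  calc δ = 2 * (δ / 2) := by ring
    _ ≤ 2 * (δ / 2) ^ s := by
      gcongr; exact Real.self_le_rpow_of_le_one (by positivity) hδ hs1.le
    _ = 2 * |halfspaceSolution s v₁ x₀ - halfspaceSolution s v₂ x₀| := by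
      rw [abs_halfspaceSolution_sub_at_normalized_sub hs (h₁.trans h₂.symm)]
    _ ≤ 2 * _ := by
      gcongr; exact le_ciSup (bddAbove_abs_halfspaceSolution_sub hs.le v₁ v₂) x₀

/-- The `L^∞(B_1)` distance between half-space solutions controls the distance of the
corresponding normal directions. -/
theorem normal_controlled_by_halfspace_sup (n : ℕ) (hn : 1 ≤ n) (s : ℝ)
    (hs : 0 < s) (hs1 : s < 1) :
    ∃ c : ℝ, 0 < c ∧ ∀ v₁ v₂ : EuclideanSpace ℝ (Fin n), ‖v₁‖ = 1 → ‖v₂‖ = 1 →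
      ‖v₁ - v₂‖ ≤ c * ⨆ x : (Metric.closedBall (0 : EuclideanSpace ℝ (Fin n)) 1),
        |(max ⟪v₁, (x : EuclideanSpace ℝ (Fin n))⟫ 0) ^ s
          - (max ⟪v₂, (x : EuclideanSpace ℝ (Fin n))⟫ 0) ^ s| :=
  normal_controlled_by_halfspace_sup_general n s hs hs1
end

section
/- Let $u : \mathbb{R}^2 \to \mathbb{R}$ be continuous, and suppose that for every unit vector $\nu \in \mathbb{S}^1$ and every $t \in \mathbb{R}$, either $u(x) \ge u(x + t\nu)$ for all $x \in \mathbb{R}^2$, or $u(x) \le u(x + t\nu)$ for all $x \in \mathbb{R}^2$. Assume further that for each fixed $\nu$, the choice of alternative is consistent in the sense that $u$ is monotone (nondecreasing or nonincreasing) along every line in direction $\nu$, for both coordinate directions $e_1, e_2$. Then $u$ is one-dimensional and monotone: there exist $e \in \mathbb{S}^1$ and a monotone function $\phi : \mathbb{R} \to \mathbb{R}$ such that $u(x) = \phi(x \cdot e)$ for all $x \in \mathbb{R}^2$. -/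
/-!
The directions along which `u` is monotone, and those along which it is antitone, form two closed
subsets of the unit circle that cover it and are exchanged by `v ↦ -v`. The circle is connected,
so some unit direction `v` lies in both, and `u` is invariant under translation by multiples of
`v`. Decomposing `x = ⟪x, J v⟫ • J v + ⟪x, v⟫ • v`, with `J` the rotation by a right angle, gives
`u x = u (⟪x, J v⟫ • J v)`, and the profile `s ↦ u (s • J v)` is monotone or antitone because `u`
is so along `J v`.
-/

open scoped RealInnerProductSpace

section MonotoneAlong

variable {E β : Type*} [NormedAddCommGroup E] [NormedSpace ℝ E]

def MonotoneAlong [Preorder β] (u : E → β) (v : E) : Prop :=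
  ∀ x, Monotone fun t : ℝ => u (x + t • v)

def AntitoneAlong [Preorder β] (u : E → β) (v : E) : Prop :=
  ∀ x, Antitone fun t : ℝ => u (x + t • v)

theorem antitoneAlong_neg_iff [Preorder β] {u : E → β} {v : E} :
    AntitoneAlong u (-v) ↔ MonotoneAlong u v := by
  have comp_neg : ∀ x, (fun t : ℝ => u (x + t • -v)) = (fun t => u (x + t • v)) ∘ Neg.neg :=
    fun x => funext fun t => by simp
  constructor
  · intro h x a b hab
    simpa [comp_neg] using h x (neg_le_neg hab)
  · intro h x a b hab
    simpa [comp_neg] using h x (neg_le_neg hab)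

theorem MonotoneAlong.apply_add_smul_eq [PartialOrder β] {u : E → β} {v : E}
    (hm : MonotoneAlong u v) (ha : AntitoneAlong u v) (x : E) (t : ℝ) :
    u (x + t • v) = u x := by
  simpa using constant_of_monotone_antitone (hm x) (ha x) t 0

variable [TopologicalSpace β] [Preorder β] [OrderClosedTopology β] {u : E → β}

theorem isClosed_setOf_monotoneAlong (hu : Continuous u) : IsClosed {v | MonotoneAlong u v} := by
  simp only [MonotoneAlong, Monotone, Set.ofPred_forall]
  refine isClosed_iInter fun x => isClosed_iInter fun a => isClosed_iInter fun b =>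
    isClosed_iInter fun _ => isClosed_le ?_ ?_ <;> fun_prop

theorem isClosed_setOf_antitoneAlong (hu : Continuous u) : IsClosed {v | AntitoneAlong u v} := by
  have : {v | AntitoneAlong u v} = Neg.neg ⁻¹' {v | MonotoneAlong u v} := by
    ext v; simp [← antitoneAlong_neg_iff (v := -v)]
  rw [this]
  exact (isClosed_setOf_monotoneAlong hu).preimage continuous_neg

theorem exists_norm_eq_one_monotoneAlong_antitoneAlong (hE : 1 < Module.rank ℝ E)
    (hu : Continuous u) (h : ∀ v : E, ‖v‖ = 1 → MonotoneAlong u v ∨ AntitoneAlong u v) :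
    ∃ v : E, ‖v‖ = 1 ∧ MonotoneAlong u v ∧ AntitoneAlong u v := by
  have : Nontrivial E := rank_pos_iff_nontrivial.mp (zero_lt_one.trans hE)
  obtain ⟨v₀, hv₀⟩ := exists_norm_eq E zero_le_one
  have hv₀' : ‖-v₀‖ = 1 := by rwa [norm_neg]
  have hsphere : ∀ {v : E}, v ∈ Metric.sphere 0 1 ↔ ‖v‖ = 1 := mem_sphere_zero_iff_norm
  have hmono : (Metric.sphere 0 1 ∩ {v | MonotoneAlong u v}).Nonempty := by
    rcases h v₀ hv₀ with hm | ha
    · exact ⟨v₀, hsphere.mpr hv₀, hm⟩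
    · exact ⟨-v₀, hsphere.mpr hv₀', antitoneAlong_neg_iff.mp (by rwa [neg_neg])⟩
  have hanti : (Metric.sphere 0 1 ∩ {v | AntitoneAlong u v}).Nonempty := by
    rcases h v₀ hv₀ with hm | ha
    · exact ⟨-v₀, hsphere.mpr hv₀', antitoneAlong_neg_iff.mpr hm⟩
    · exact ⟨v₀, hsphere.mpr hv₀, ha⟩
  obtain ⟨v, hv, hvm, hva⟩ := isPreconnected_closed_iff.mp
    (isConnected_sphere hE 0 zero_le_one).isPreconnected _ _
    (isClosed_setOf_monotoneAlong hu) (isClosed_setOf_antitoneAlong hu)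
    (fun v hv => h v (hsphere.mp hv)) hmono hanti
  exact ⟨v, hsphere.mp hv, hvm, hva⟩

end MonotoneAlong

section TwoDim

open Module

variable {E : Type*} [NormedAddCommGroup E] [InnerProductSpace ℝ E] [Fact (finrank ℝ E = 2)]

theorem Orientation.inner_rightAngleRotation_smul_add_inner_smul (o : Orientation ℝ E (Fin 2))
    {v : E} (hv : ‖v‖ = 1) (x : E) :
    ⟪x, o.rightAngleRotation v⟫ • o.rightAngleRotation v + ⟪x, v⟫ • v = x := by
  refine ext_inner_right ℝ fun y => ?_
  have := o.inner_mul_inner_add_areaForm_mul_areaForm v x y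
  rw [real_inner_comm x v, hv] at this
  simp only [inner_add_left, real_inner_smul_left, o.inner_rightAngleRotation_right,
    o.inner_rightAngleRotation_left, o.areaForm_swap x v, neg_neg]
  linarith

variable {β : Type*} [TopologicalSpace β] [PartialOrder β] [OrderClosedTopology β] {u : E → β}

theorem exists_inner_profile_of_monotoneAlong_or_antitoneAlong (hu : Continuous u)
    (h : ∀ v : E, ‖v‖ = 1 → MonotoneAlong u v ∨ AntitoneAlong u v) :
    ∃ e : E, ‖e‖ = 1 ∧ ∃ φ : ℝ → β, (Monotone φ ∨ Antitone φ) ∧ ∀ x, u x = φ ⟪x, e⟫ := by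
  have : FiniteDimensional ℝ E := .of_fact_finrank_eq_two
  have hE : 1 < Module.rank ℝ E := by
    rw [← finrank_eq_rank, Fact.out (p := finrank ℝ E = 2)]; norm_num
  obtain ⟨v, hv, hvm, hva⟩ := exists_norm_eq_one_monotoneAlong_antitoneAlong hE hu h
  let o : Orientation ℝ E (Fin 2) := (finBasisOfFinrankEq ℝ E Fact.out).orientation
  set e := o.rightAngleRotation v
  have he : ‖e‖ = 1 := by simpa [e] using hv
  refine ⟨e, he, fun s => u (s • e), ?_, fun x => ?_⟩
  · refine (h e he).imp (fun hm => ?_) (fun ha => ?_)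
    · simpa using hm 0
    · simpa using ha 0
  · conv_lhs => rw [← o.inner_rightAngleRotation_smul_add_inner_smul hv x]
    exact hvm.apply_add_smul_eq hva _ _

end TwoDim

theorem two_dim_translation_rigidity_general (u : EuclideanSpace ℝ (Fin 2) → ℝ)
    (hu : Continuous u)
    (hmono : ∀ ν : EuclideanSpace ℝ (Fin 2), ‖ν‖ = 1 →
      (∀ x : EuclideanSpace ℝ (Fin 2), ∀ t₁ t₂ : ℝ, t₁ ≤ t₂ →
        u (x + t₁ • ν) ≤ u (x + t₂ • ν)) ∨
      (∀ x : EuclideanSpace ℝ (Fin 2), ∀ t₁ t₂ : ℝ, t₁ ≤ t₂ →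
        u (x + t₂ • ν) ≤ u (x + t₁ • ν))) :
    ∃ e : EuclideanSpace ℝ (Fin 2), ‖e‖ = 1 ∧ ∃ φ : ℝ → ℝ,
      (Monotone φ ∨ Antitone φ) ∧ ∀ x, u x = φ ⟪x, e⟫ := by
  have : Fact (Module.finrank ℝ (EuclideanSpace ℝ (Fin 2)) = 2) := ⟨finrank_euclideanSpace_fin⟩
  exact exists_inner_profile_of_monotoneAlong_or_antitoneAlong hu fun ν hν =>
    (hmono ν hν).imp (fun hm x _ _ => hm x _ _) (fun ha x _ _ => ha x _ _)

/-- Two-dimensional rigidity: a continuous function on `ℝ²` that is translation-comparable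
and monotone along every line in every direction is one-dimensional and monotone:
`u(x) = φ(x·e)` for some unit vector `e` and monotone `φ`. -/
theorem two_dim_translation_rigidity (u : EuclideanSpace ℝ (Fin 2) → ℝ)
    (hu : Continuous u)
    (hcomp : ∀ ν : EuclideanSpace ℝ (Fin 2), ‖ν‖ = 1 → ∀ t : ℝ,
      (∀ x, u (x + t • ν) ≤ u x) ∨ (∀ x, u x ≤ u (x + t • ν)))
    (hmono : ∀ ν : EuclideanSpace ℝ (Fin 2), ‖ν‖ = 1 →
      (∀ x : EuclideanSpace ℝ (Fin 2), ∀ t₁ t₂ : ℝ, t₁ ≤ t₂ →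
        u (x + t₁ • ν) ≤ u (x + t₂ • ν)) ∨
      (∀ x : EuclideanSpace ℝ (Fin 2), ∀ t₁ t₂ : ℝ, t₁ ≤ t₂ →
        u (x + t₂ • ν) ≤ u (x + t₁ • ν))) :
    ∃ e : EuclideanSpace ℝ (Fin 2), ‖e‖ = 1 ∧ ∃ φ : ℝ → ℝ,
      (Monotone φ ∨ Antitone φ) ∧ ∀ x, u x = φ ⟪x, e⟫ :=
  two_dim_translation_rigidity_general u hu hmono
end
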